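/- arXiv:1705.07667 — 5 statements merged into one kernel-verified Lean document; each statement's English description precedes it below -/
import Mathlib

section
/- For x in the open positive orthant, the limit as r → 0 of the gradient of ξ̃_r(x) equals (1/n) times the gradient of the geometric mean ξ_0 at x; componentwise, ∂ξ̃_r/∂x_j (x) → (1/n) ξ_0(x)/x_j as r → 0. -/
/-!
Since `(1 / n ^ (1 / r)) * S_r ^ (1 / r - 1) = M_r / S_r`, where `S_r = ∑ xᵢ ^ r` and
`M_r = (S_r / n) ^ (1 / r)` is the power mean, it suffices that `M_r` tends to the geometric mean,
`S_r → n` and `x_j ^ (r - 1) → 1 / x_j`. The first limit is the classical one: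
`log M_r = (log S_r - log S_0) / r` is a difference quotient of `log S` at `0`, hence tends to
`(log S)'(0) = (∑ log xᵢ) / n`.
-/

open Filter Topology Real

section PowerMean

variable {ι : Type*} [Fintype ι] {x : ι → ℝ}

theorem sum_rpow_pos [Nonempty ι] (hx : ∀ i, 0 < x i) (r : ℝ) : 0 < ∑ i, x i ^ r :=
  Finset.sum_pos (fun i _ => rpow_pos_of_pos (hx i) r) Finset.univ_nonempty

theorem hasDerivAt_sum_rpow (hx : ∀ i, 0 < x i) (t : ℝ) :
    HasDerivAt (fun r => ∑ i, x i ^ r) (∑ i, x i ^ t * log (x i)) t :=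
  HasDerivAt.fun_sum fun i _ => (hasStrictDerivAt_const_rpow (hx i) t).hasDerivAt

theorem tendsto_log_powerMean_nhdsNE_zero [Nonempty ι] (hx : ∀ i, 0 < x i) :
    Tendsto (fun r : ℝ => log ((∑ i, x i ^ r) / Fintype.card ι) * (1 / r)) (𝓝[≠] 0)
      (𝓝 ((∑ i, log (x i)) / Fintype.card ι)) := by
  have hcard : (0 : ℝ) < Fintype.card ι := by positivity
  have hS0 : (∑ i, x i ^ (0 : ℝ)) = Fintype.card ι := by simp
  have hlogS := (hasDerivAt_sum_rpow hx 0).log (hS0 ▸ hcard.ne')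
  rw [hS0] at hlogS
  simp only [rpow_zero, one_mul] at hlogS
  refine hlogS.tendsto_slope.congr' (eventually_nhdsWithin_of_forall fun r _ => ?_)
  simp only [slope_def_field, hS0, log_div (sum_rpow_pos hx r).ne' hcard.ne', sub_zero]
  ring

theorem tendsto_powerMean_nhdsNE_zero [Nonempty ι] (hx : ∀ i, 0 < x i) :
    Tendsto (fun r : ℝ => ((∑ i, x i ^ r) / Fintype.card ι) ^ (1 / r)) (𝓝[≠] 0)
      (𝓝 ((∏ i, x i) ^ (1 / (Fintype.card ι : ℝ)))) := by
  have hM := (continuous_exp.tendsto _).comp (tendsto_log_powerMean_nhdsNE_zero hx)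
  have hG : (∏ i, x i) ^ (1 / (Fintype.card ι : ℝ)) =
      exp ((∑ i, log (x i)) / Fintype.card ι) := by
    rw [rpow_def_of_pos (Finset.prod_pos fun i _ => hx i),
      log_prod fun i _ => (hx i).ne', mul_one_div]
  rw [hG]
  refine hM.congr fun r => ?_
  rw [Function.comp_apply, ← rpow_def_of_pos (div_pos (sum_rpow_pos hx r) (by positivity))]

end PowerMean

theorem one_div_rpow_one_div_mul_rpow_one_div_sub_one {n S : ℝ} (hn : 0 < n) (hS : 0 < S)
    (r : ℝ) : 1 / n ^ (1 / r) * S ^ (1 / r - 1) = (S / n) ^ (1 / r) / S := by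
  rw [rpow_sub_one hS.ne', div_rpow hS.le hn.le]
  ring

theorem stmt1_general {n : ℕ} (x : Fin n → ℝ) (hx : ∀ i, 0 < x i) (j : Fin n) :
    Filter.Tendsto
      (fun r : ℝ => (1 / (n : ℝ) ^ (1 / r)) * (∑ i, x i ^ r) ^ (1 / r - 1) * x j ^ (r - 1))
      (𝓝[≠] (0 : ℝ))
      (𝓝 ((1 / (n : ℝ)) * (∏ i, x i) ^ (1 / (n : ℝ)) / x j)) := by
  have : Nonempty (Fin n) := ⟨j⟩
  have hn : (0 : ℝ) < n := by exact_mod_cast j.pos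
  have hM := tendsto_powerMean_nhdsNE_zero hx
  rw [Fintype.card_fin] at hM
  have hSlim : Tendsto (fun r : ℝ => ∑ i, x i ^ r) (𝓝[≠] 0) (𝓝 (n : ℝ)) := by
    simpa using (hasDerivAt_sum_rpow hx 0).continuousAt.tendsto.mono_left nhdsWithin_le_nhds
  have hxj : Tendsto (fun r : ℝ => x j ^ (r - 1)) (𝓝[≠] 0) (𝓝 (x j)⁻¹) := by
    have := ((continuous_const_rpow (hx j).ne').comp (continuous_sub_right 1)).tendsto 0
    simpa [Function.comp_def, rpow_neg_one] using this.mono_left nhdsWithin_le_nhds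
  rw [show 1 / (n : ℝ) * (∏ i, x i) ^ (1 / (n : ℝ)) / x j =
    (∏ i, x i) ^ (1 / (n : ℝ)) / n * (x j)⁻¹ by ring]
  refine ((hM.div hSlim hn.ne').mul hxj).congr fun r => ?_
  rw [one_div_rpow_one_div_mul_rpow_one_div_sub_one hn (sum_rpow_pos hx r)]
  rfl

/-- Componentwise convergence of the gradient of ξ̃_r to (1/n)·∇ξ₀ as r → 0. -/
theorem stmt1 {n : ℕ} (hn : 1 ≤ n) (x : Fin n → ℝ) (hx : ∀ i, 0 < x i) (j : Fin n) :
    Filter.Tendsto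
      (fun r : ℝ => (1 / (n : ℝ) ^ (1 / r)) * (∑ i, x i ^ r) ^ (1 / r - 1) * x j ^ (r - 1))
      (𝓝[≠] (0 : ℝ))
      (𝓝 ((1 / (n : ℝ)) * (∏ i, x i) ^ (1 / (n : ℝ)) / x j)) :=
  stmt1_general x hx j
end

section
/- Let x ∈ (0,∞)^n and s ∈ R^n with Xs ≠ 0, where X = diag(x). For r ∈ [0,1], let I_r = {i : x_i^{1-r}|s_i| = max_j x_j^{1-r}|s_j|}. Then for 0 ≤ r < r' ≤ 1 and any indices i_r ∈ I_r, i_{r'} ∈ I_{r'}, one has x_{i_r} ≥ x_{i_{r'}} and |s_{i_r}| ≤ |s_{i_{r'}}|. -/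
/-- Monotonicity of the argmax index sets I_r(x,s) in r. -/
theorem stmt3 {n : ℕ} (x s : Fin n → ℝ) (hx : ∀ i, 0 < x i)
    (hxs : ∃ i, x i * s i ≠ 0) (r r' : ℝ) (hr : 0 ≤ r) (hrr' : r < r') (hr' : r' ≤ 1)
    (ir ir' : Fin n)
    (hir : ∀ j, x j ^ (1 - r) * |s j| ≤ x ir ^ (1 - r) * |s ir|)
    (hir' : ∀ j, x j ^ (1 - r') * |s j| ≤ x ir' ^ (1 - r') * |s ir'|) :
    x ir' ≤ x ir ∧ |s ir| ≤ |s ir'| := by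
  obtain ⟨i0, hi0⟩ := hxs
  have hs0 : s i0 ≠ 0 := fun h => hi0 (by simp [h])
  have habs0 : 0 < |s i0| := abs_pos.mpr hs0
  have ha := hx ir
  have hb := hx ir'
  have hirpos : 0 < |s ir| := by
    have h1 : 0 < x i0 ^ (1 - r) * |s i0| :=
      mul_pos (Real.rpow_pos_of_pos (hx i0) _) habs0
    have h2 := hir i0
    have h3 : 0 < x ir ^ (1 - r) := Real.rpow_pos_of_pos ha _
    nlinarith [abs_nonneg (s ir)]
  have hir'pos : 0 < |s ir'| := by
    have h1 : 0 < x i0 ^ (1 - r') * |s i0| :=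
      mul_pos (Real.rpow_pos_of_pos (hx i0) _) habs0
    have h2 := hir' i0
    have h3 : 0 < x ir' ^ (1 - r') := Real.rpow_pos_of_pos hb _
    nlinarith [abs_nonneg (s ir')]
  have h1 := hir ir'
  have h2 := hir' ir
  have key : x ir' ≤ x ir := by
    by_contra hab
    push_neg at hab
    have h3 : x ir ^ (r' - r) < x ir' ^ (r' - r) :=
      Real.rpow_lt_rpow (le_of_lt ha) hab (by linarith)
    have ea : x ir ^ (1 - r) = x ir ^ (1 - r') * x ir ^ (r' - r) := by
      rw [← Real.rpow_add ha]; ring_nf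
    have eb : x ir' ^ (1 - r) = x ir' ^ (1 - r') * x ir' ^ (r' - r) := by
      rw [← Real.rpow_add hb]; ring_nf
    rw [ea] at h1
    rw [eb] at h1
    have p1 : 0 < x ir ^ (1 - r') := Real.rpow_pos_of_pos ha _
    have p2 : 0 < x ir' ^ (1 - r') := Real.rpow_pos_of_pos hb _
    have p3 : 0 < x ir ^ (r' - r) := Real.rpow_pos_of_pos ha _
    nlinarith [mul_pos p2 hir'pos, mul_pos p1 hirpos]
  refine ⟨key, ?_⟩
  have h4 : x ir' ^ (1 - r') ≤ x ir ^ (1 - r') :=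
    Real.rpow_le_rpow (le_of_lt hb) key (by linarith)
  have p1 : 0 < x ir ^ (1 - r') := Real.rpow_pos_of_pos ha _
  nlinarith [abs_nonneg (s ir')]
end

section
/- Let (x^k) be a sequence in R^n converging to x̄ with x̄_I = 0 and x̄_J > 0 (I, J a partition of indices), and suppose there are h > 0 and a vector s̄ with s̄_J = 0 such that ‖x^k - x̄‖_2 ≤ h ⟨s̄, x^k - x̄⟩ for all k. Then h²‖s̄_I‖₂² ≥ 1 and ‖x^k_J - x̄_J‖₂ ≤ √(h²‖s̄_I‖₂² - 1) · ‖x^k_I‖₂ for all k. -/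
open Filter Topology

/-- The comparison of the J-part with the I-part of x^k - x̄. -/
theorem stmt4 {n : ℕ} (x : ℕ → Fin n → ℝ) (xbar sbar : Fin n → ℝ) (h : ℝ) (hh : 0 < h)
    (I J : Finset (Fin n))
    (hI : ∀ i, i ∈ I ↔ xbar i = 0) (hJ : ∀ i, i ∈ J ↔ 0 < xbar i)
    (hpart : ∀ i, i ∈ I ∨ i ∈ J)
    (hsJ : ∀ i ∈ J, sbar i = 0)
    (hconv : Filter.Tendsto x Filter.atTop (𝓝 xbar))
    (hineq : ∀ k, Real.sqrt (∑ i, (x k i - xbar i) ^ 2) ≤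
      h * ∑ i, sbar i * (x k i - xbar i))
    (hex : ∃ k, ∃ i ∈ I, x k i ≠ 0) :
    1 ≤ h ^ 2 * ∑ i ∈ I, sbar i ^ 2 ∧
    ∀ k, Real.sqrt (∑ i ∈ J, (x k i - xbar i) ^ 2) ≤
      Real.sqrt (h ^ 2 * (∑ i ∈ I, sbar i ^ 2) - 1) * Real.sqrt (∑ i ∈ I, (x k i) ^ 2) := by
  have hdisj : Disjoint I J := by
    rw [Finset.disjoint_left]
    intro i hiI hiJ
    have h1 := (hI i).mp hiI
    have h2 := (hJ i).mp hiJ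
    linarith
  have hunion : I ∪ J = Finset.univ := by
    ext i; simp [hpart i]
  have hsplit : ∀ f : Fin n → ℝ, ∑ i, f i = ∑ i ∈ I, f i + ∑ i ∈ J, f i := by
    intro f
    rw [← Finset.sum_union hdisj, hunion]
  set S := ∑ i ∈ I, sbar i ^ 2 with hS
  have hSnn : 0 ≤ S := Finset.sum_nonneg fun i _ => sq_nonneg _
  have key : ∀ k, (∑ i ∈ I, (x k i)^2) + ∑ i ∈ J, (x k i - xbar i)^2 ≤
      h^2 * S * ∑ i ∈ I, (x k i)^2 := by
    intro k
    have hxbarI : ∀ i ∈ I, xbar i = 0 := fun i hi => (hI i).mp hi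
    have hT : ∑ i, sbar i * (x k i - xbar i) = ∑ i ∈ I, sbar i * x k i := by
      rw [hsplit]
      have h1 : ∑ i ∈ J, sbar i * (x k i - xbar i) = 0 :=
        Finset.sum_eq_zero fun i hi => by rw [hsJ i hi]; ring
      have h2 : ∑ i ∈ I, sbar i * (x k i - xbar i) = ∑ i ∈ I, sbar i * x k i :=
        Finset.sum_congr rfl fun i hi => by rw [hxbarI i hi]; ring
      rw [h1, h2]; ring
    have hA : ∑ i ∈ I, (x k i - xbar i)^2 = ∑ i ∈ I, (x k i)^2 :=
      Finset.sum_congr rfl fun i hi => by rw [hxbarI i hi]; ring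
    have h1 := hineq k
    rw [hT] at h1
    have hTnn : 0 ≤ h * ∑ i ∈ I, sbar i * x k i :=
      le_trans (Real.sqrt_nonneg _) h1
    have hsq : ∑ i, (x k i - xbar i)^2 ≤ (h * ∑ i ∈ I, sbar i * x k i)^2 := by
      have hnn : (0:ℝ) ≤ ∑ i, (x k i - xbar i)^2 :=
        Finset.sum_nonneg fun i _ => sq_nonneg _
      have := Real.sq_sqrt hnn
      nlinarith [Real.sqrt_nonneg (∑ i, (x k i - xbar i)^2)]
    have hcs := Finset.sum_mul_sq_le_sq_mul_sq I sbar (fun i => x k i)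
    rw [hsplit, hA] at hsq
    nlinarith [hsq, hcs, sq_nonneg h]
  have h1le : 1 ≤ h^2 * S := by
    obtain ⟨k, i, hiI, hxi⟩ := hex
    have hApos : 0 < ∑ i ∈ I, (x k i)^2 :=
      Finset.sum_pos' (fun i _ => sq_nonneg _) ⟨i, hiI, by positivity⟩
    have hBnn : 0 ≤ ∑ i ∈ J, (x k i - xbar i)^2 :=
      Finset.sum_nonneg fun _ _ => sq_nonneg _
    nlinarith [key k]
  refine ⟨h1le, fun k => ?_⟩
  have hB : ∑ i ∈ J, (x k i - xbar i)^2 ≤ (h^2 * S - 1) * ∑ i ∈ I, (x k i)^2 := by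
    have hAnn : 0 ≤ ∑ i ∈ I, (x k i)^2 := Finset.sum_nonneg fun _ _ => sq_nonneg _
    nlinarith [key k]
  calc Real.sqrt (∑ i ∈ J, (x k i - xbar i)^2)
      ≤ Real.sqrt ((h^2*S-1) * ∑ i ∈ I, (x k i)^2) := Real.sqrt_le_sqrt hB
    _ = Real.sqrt (h^2*S-1) * Real.sqrt (∑ i ∈ I, (x k i)^2) :=
        Real.sqrt_mul (by linarith) _
end

section
/- Suppose there is a constant L > 0 such that every optimal solution w̄ of max{⟨c,w⟩ : Aw = 0, ‖X^{-1}w‖₂ ≤ 1} satisfies ‖w̄‖₂ ≤ L ⟨c, w̄⟩, for every positive diagonal X. Then for every x > 0 and r ∈ (0,1), the vector v = X^{1-r/2} P X^{1-r/2} c (P the projection onto ker A X^{1-r/2}) satisfies ‖v‖₂ ≤ L ⟨c, v⟩. -/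
open Matrix

lemma cs_dot {n : ℕ} (u z : Fin n → ℝ) :
    u ⬝ᵥ z ≤ Real.sqrt (u ⬝ᵥ u) * Real.sqrt (z ⬝ᵥ z) := by
  have h := Finset.sum_mul_sq_le_sq_mul_sq Finset.univ u z
  have h1 : u ⬝ᵥ u = ∑ i, u i ^ 2 := by simp [dotProduct, sq]
  have h2 : z ⬝ᵥ z = ∑ i, z i ^ 2 := by simp [dotProduct, sq]
  calc u ⬝ᵥ z ≤ |u ⬝ᵥ z| := le_abs_self _
    _ = Real.sqrt ((u ⬝ᵥ z) ^ 2) := (Real.sqrt_sq_eq_abs _).symm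
    _ ≤ Real.sqrt ((∑ i, u i ^ 2) * ∑ i, z i ^ 2) := by
        apply Real.sqrt_le_sqrt
        simpa [dotProduct] using h
    _ = _ := by
        rw [h1, h2, Real.sqrt_mul (by positivity)]

/-- Transfer of the ellipsoidal-problem bound to v = X^{1-r/2}PX^{1-r/2}c. -/
theorem stmt6 {m n : ℕ} (A : Matrix (Fin m) (Fin n) ℝ) (hA : A.rank = m)
    (c : Fin n → ℝ) (L : ℝ) (hL : 0 < L)
    (hellip : ∀ xd : Fin n → ℝ, (∀ i, 0 < xd i) → ∀ wbar : Fin n → ℝ,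
      A.mulVec wbar = 0 →
      Real.sqrt ((fun i => wbar i / xd i) ⬝ᵥ (fun i => wbar i / xd i)) ≤ 1 →
      (∀ w : Fin n → ℝ, A.mulVec w = 0 →
        Real.sqrt ((fun i => w i / xd i) ⬝ᵥ (fun i => w i / xd i)) ≤ 1 →
        c ⬝ᵥ w ≤ c ⬝ᵥ wbar) →
      Real.sqrt (wbar ⬝ᵥ wbar) ≤ L * (c ⬝ᵥ wbar))
    (x : Fin n → ℝ) (hx : ∀ i, 0 < x i) (r : ℝ) (hr : r ∈ Set.Ioo (0 : ℝ) 1)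
    (P : Matrix (Fin n) (Fin n) ℝ)
    (hPsymm : P.transpose = P)
    (hPker : ∀ w : Fin n → ℝ,
      (A * Matrix.diagonal (fun i => x i ^ (1 - r / 2))).mulVec (P.mulVec w) = 0)
    (hPfix : ∀ w : Fin n → ℝ,
      (A * Matrix.diagonal (fun i => x i ^ (1 - r / 2))).mulVec w = 0 → P.mulVec w = w)
    (v : Fin n → ℝ)
    (hv : v = fun i => x i ^ (1 - r / 2) *
      (P.mulVec (fun j => x j ^ (1 - r / 2) * c j)) i) :
    Real.sqrt (v ⬝ᵥ v) ≤ L * (c ⬝ᵥ v) := by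
  set xd : Fin n → ℝ := fun i => x i ^ (1 - r / 2) with hxd
  have hxdpos : ∀ i, 0 < xd i := fun i => Real.rpow_pos_of_pos (hx i) _
  set y : Fin n → ℝ := fun j => xd j * c j with hy
  set u : Fin n → ℝ := P.mulVec y with hu
  have hvu : v = fun i => xd i * u i := hv
  -- transpose trick : for all z, y ⬝ᵥ P.mulVec z = u ⬝ᵥ z
  have htr : ∀ z : Fin n → ℝ, y ⬝ᵥ P.mulVec z = u ⬝ᵥ z := by
    intro z
    have hyP : y ᵥ* P = u := by
      conv_lhs => rw [← hPsymm, Matrix.vecMul_transpose]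
    rw [Matrix.dotProduct_mulVec, hyP]
  have hDu : (A * Matrix.diagonal xd).mulVec u = 0 := hPker y
  have hPu : P.mulVec u = u := hPfix u hDu
  have hvd : v = (Matrix.diagonal xd).mulVec u := by
    rw [hvu]; ext i; rw [Matrix.mulVec_diagonal]
  have hAv : A.mulVec v = 0 := by
    rw [hvd, Matrix.mulVec_mulVec]; exact hDu
  by_cases hu0 : u = 0
  · have : v = 0 := by rw [hvu, hu0]; ext i; simp
    simp [this]
  · have huu : 0 < u ⬝ᵥ u := by
      have hnn : (0:ℝ) ≤ u ⬝ᵥ u := by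
        have : u ⬝ᵥ u = ∑ i, u i ^ 2 := by simp [dotProduct, sq]
        rw [this]; positivity
      exact lt_of_le_of_ne hnn
        (fun h => hu0 (dotProduct_self_eq_zero.mp h.symm))
    set N : ℝ := Real.sqrt (u ⬝ᵥ u) with hN
    have hNpos : 0 < N := Real.sqrt_pos.mpr huu
    have hN2 : N ^ 2 = u ⬝ᵥ u := Real.sq_sqrt huu.le
    set wbar : Fin n → ℝ := fun i => v i / N with hwbar
    have hcv : c ⬝ᵥ v = u ⬝ᵥ u := by
      have : c ⬝ᵥ v = y ⬝ᵥ u := by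
        rw [hvu]; simp only [dotProduct, hy]; apply Finset.sum_congr rfl; intro i _; ring
      rw [this, ← hPu, htr u, hPu]
    -- apply hellip
    have hkey := hellip xd hxdpos wbar
    have h1 : A.mulVec wbar = 0 := by
      have : wbar = N⁻¹ • v := by ext i; simp [hwbar, div_eq_inv_mul]
      rw [this, Matrix.mulVec_smul, hAv, smul_zero]
    have h2 : Real.sqrt ((fun i => wbar i / xd i) ⬝ᵥ (fun i => wbar i / xd i)) ≤ 1 := by
      have heq : ∀ i, wbar i / xd i = u i / N := by
        intro i
        show v i / N / xd i = u i / N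
        simp only [hvu]
        rw [div_div, mul_comm N (xd i), ← div_div, mul_comm (xd i) (u i),
          mul_div_assoc, div_self (hxdpos i).ne', mul_one]
      have : ((fun i => wbar i / xd i) ⬝ᵥ (fun i => wbar i / xd i)) = (u ⬝ᵥ u) / N ^ 2 := by
        simp only [heq, dotProduct, div_mul_div_comm, pow_two]
        rw [← Finset.sum_div]
      rw [this, hN2, div_self huu.ne', Real.sqrt_one]
    have h3 : ∀ w : Fin n → ℝ, A.mulVec w = 0 →
        Real.sqrt ((fun i => w i / xd i) ⬝ᵥ (fun i => w i / xd i)) ≤ 1 →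
        c ⬝ᵥ w ≤ c ⬝ᵥ wbar := by
      intro w hAw hwn
      set z : Fin n → ℝ := fun i => w i / xd i with hz
      have hwz : w = fun i => xd i * z i := by
        ext i
        show w i = xd i * (w i / xd i)
        rw [mul_comm, div_mul_cancel₀ _ (hxdpos i).ne']
      have hPz : P.mulVec z = z := by
        apply hPfix
        rw [← Matrix.mulVec_mulVec]
        have : (Matrix.diagonal xd).mulVec z = w := by
          ext i; rw [Matrix.mulVec_diagonal, hwz]
        rw [this, hAw]
      have hcw : c ⬝ᵥ w = u ⬝ᵥ z := by
        have : c ⬝ᵥ w = y ⬝ᵥ z := by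
          rw [hwz]; simp only [dotProduct, hy]; apply Finset.sum_congr rfl; intro i _; ring
        rw [this, ← hPz, htr z, hPz]
      have hzn : Real.sqrt (z ⬝ᵥ z) ≤ 1 := hwn
      have hcwbar : c ⬝ᵥ wbar = N := by
        have : c ⬝ᵥ wbar = (c ⬝ᵥ v) / N := by
          simp only [hwbar, dotProduct, ← mul_div_assoc]
          rw [← Finset.sum_div]
        rw [this, hcv, ← hN2, sq, mul_div_assoc, div_self hNpos.ne', mul_one]
      rw [hcw, hcwbar]
      calc u ⬝ᵥ z ≤ Real.sqrt (u ⬝ᵥ u) * Real.sqrt (z ⬝ᵥ z) := cs_dot u z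
        _ ≤ N * 1 := by rw [← hN]; exact mul_le_mul_of_nonneg_left hzn hNpos.le
        _ = N := mul_one N
    have hfin := hkey h1 h2 h3
    have hcwbar : c ⬝ᵥ wbar = N := by
      have : c ⬝ᵥ wbar = (c ⬝ᵥ v) / N := by
        simp only [hwbar, dotProduct, ← mul_div_assoc]
        rw [← Finset.sum_div]
      rw [this, hcv, ← hN2, sq, mul_div_assoc, div_self hNpos.ne', mul_one]
    have hNN : N * N ≠ 0 := (mul_pos hNpos hNpos).ne'
    have hvv : v ⬝ᵥ v = N ^ 2 * (wbar ⬝ᵥ wbar) := by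
      simp only [hwbar, dotProduct, div_mul_div_comm, pow_two, Finset.mul_sum]
      apply Finset.sum_congr rfl
      intro i _
      rw [mul_comm (N * N), div_mul_cancel₀ _ hNN]
    calc Real.sqrt (v ⬝ᵥ v) = N * Real.sqrt (wbar ⬝ᵥ wbar) := by
          rw [hvv, Real.sqrt_mul (sq_nonneg N), Real.sqrt_sq hNpos.le]
      _ ≤ N * (L * (c ⬝ᵥ wbar)) := by
          exact mul_le_mul_of_nonneg_left hfin hNpos.le
      _ = L * (c ⬝ᵥ v) := by rw [hcwbar, hcv, ← hN2]; ring
end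

section
/- Let r ∈ (0,1), n_I ≥ 1, and x ∈ (0,∞)^{n_I}. Then ξ_r(x) := (∑ x_i^r)^{1/r} ≤ n_I^{1/r - 1} ∑ x_i ≤ n_I^{1/r - 1/2} ‖x‖₂. Consequently, if ‖x^k - x̄‖₂ ≤ h(⟨c,x^k⟩ - c̄) with x̄_I = 0 and x^k_I > 0, the potential F(x^k) = ln((⟨c,x^k⟩ - c̄)/ξ_r(x^k_I)) is bounded below by -ln(n_I^{1/r - 1/2} h). -/
lemma aux18 {ι : Type*} (I : Finset ι) (hI : I.Nonempty) {r : ℝ} (hr0 : 0 < r) (hr1 : r < 1)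
    (x : ι → ℝ) (hx : ∀ i ∈ I, 0 < x i) :
    (∑ i ∈ I, x i ^ r) ^ (1 / r) ≤ (I.card : ℝ) ^ (1 / r - 1) * ∑ i ∈ I, x i ∧
    (I.card : ℝ) ^ (1 / r - 1) * ∑ i ∈ I, x i ≤
      (I.card : ℝ) ^ (1 / r - 1 / 2) * Real.sqrt (∑ i ∈ I, x i ^ 2) := by
  set n : ℝ := (I.card : ℝ) with hn
  have hn0 : (0 : ℝ) < n := Nat.cast_pos.mpr (Finset.card_pos.mpr hI)
  set S : ℝ := ∑ i ∈ I, x i ^ r with hSdef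
  set T : ℝ := ∑ i ∈ I, x i with hTdef
  have hT : 0 < T := Finset.sum_pos hx hI
  have hS : 0 < S := Finset.sum_pos (fun i hi => Real.rpow_pos_of_pos (hx i hi) r) hI
  have hp : (1 : ℝ) ≤ 1 / r := by rw [le_div_iff₀ hr0]; linarith
  have hw' : ∑ _i ∈ I, (1 / n) = 1 := by
    rw [Finset.sum_const, nsmul_eq_mul, mul_one_div, div_self hn0.ne']
  constructor
  · have key := Real.rpow_arith_mean_le_arith_mean_rpow I (fun _ => 1 / n)
      (fun i => x i ^ r) (fun i _ => by positivity) hw'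
      (fun i hi => Real.rpow_nonneg (hx i hi).le r) hp
    have h1 : ((1 / n) * S) ^ (1 / r) ≤ (1 / n) * T := by
      calc ((1 / n) * S) ^ (1 / r) = (∑ i ∈ I, (1 / n) * x i ^ r) ^ (1 / r) := by
            rw [← Finset.mul_sum]
        _ ≤ ∑ i ∈ I, (1 / n) * (x i ^ r) ^ (1 / r : ℝ) := key
        _ = (1 / n) * T := by
            rw [← Finset.mul_sum]
            congr 1
            refine Finset.sum_congr rfl fun i hi => ?_
            rw [← Real.rpow_mul (hx i hi).le, mul_one_div, div_self hr0.ne', Real.rpow_one]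
    have e1 : n ^ (1 / r) * ((1 / n) * S) ^ (1 / r) = S ^ (1 / r) := by
      rw [Real.mul_rpow (by positivity) hS.le, ← mul_assoc,
        ← Real.mul_rpow hn0.le (by positivity), mul_one_div, div_self hn0.ne',
        Real.one_rpow, one_mul]
    have e2 : n ^ (1 / r : ℝ) * ((1 / n) * T) = n ^ (1 / r - 1) * T := by
      rw [Real.rpow_sub hn0, Real.rpow_one]
      field_simp
    calc S ^ (1 / r) = n ^ (1 / r) * ((1 / n) * S) ^ (1 / r) := e1.symm
      _ ≤ n ^ (1 / r : ℝ) * ((1 / n) * T) := by gcongr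
      _ = n ^ (1 / r - 1) * T := e2
  · set Q : ℝ := ∑ i ∈ I, x i ^ 2 with hQdef
    have hQ : 0 ≤ Q := Finset.sum_nonneg fun i _ => sq_nonneg _
    have cs : T ≤ Real.sqrt n * Real.sqrt Q := by
      have h2 : T ^ 2 ≤ n * Q := by
        have := sq_sum_le_card_mul_sum_sq (s := I) (f := x)
        exact_mod_cast this
      calc T = Real.sqrt (T ^ 2) := (Real.sqrt_sq hT.le).symm
        _ ≤ Real.sqrt (n * Q) := Real.sqrt_le_sqrt h2
        _ = Real.sqrt n * Real.sqrt Q := Real.sqrt_mul hn0.le Q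
    have e3 : n ^ (1 / r - 1) * Real.sqrt n = n ^ (1 / r - 1 / 2) := by
      rw [Real.sqrt_eq_rpow, ← Real.rpow_add hn0]
      ring_nf
    calc n ^ (1 / r - 1) * T ≤ n ^ (1 / r - 1) * (Real.sqrt n * Real.sqrt Q) := by gcongr
      _ = n ^ (1 / r - 1 / 2) * Real.sqrt Q := by rw [← mul_assoc, e3]

/-- ξ_r(x) ≤ n^{1/r-1}∑x_i ≤ n^{1/r-1/2}‖x‖₂, and consequently the potential
function is bounded below. -/
theorem stmt18 (nI : ℕ) (hn : 1 ≤ nI) (r : ℝ) (hr : r ∈ Set.Ioo (0 : ℝ) 1) :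
    (∀ x : Fin nI → ℝ, (∀ i, 0 < x i) →
      (∑ i, x i ^ r) ^ (1 / r) ≤ (nI : ℝ) ^ (1 / r - 1) * ∑ i, x i ∧
      (nI : ℝ) ^ (1 / r - 1) * ∑ i, x i ≤
        (nI : ℝ) ^ (1 / r - 1 / 2) * Real.sqrt (∑ i, x i ^ 2)) ∧
    (∀ (nn : ℕ) (I : Finset (Fin nn)) (xk xbar c : Fin nn → ℝ) (cbar h : ℝ),
      I.card = nI → 0 < h →
      (∀ i ∈ I, xbar i = 0) → (∀ i ∈ I, 0 < xk i) →
      Real.sqrt (∑ i, (xk i - xbar i) ^ 2) ≤ h * ((∑ i, c i * xk i) - cbar) →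
      -Real.log ((nI : ℝ) ^ (1 / r - 1 / 2) * h) ≤
        Real.log (((∑ i, c i * xk i) - cbar) / (∑ i ∈ I, xk i ^ r) ^ (1 / r))) := by
  obtain ⟨hr0, hr1⟩ := hr
  constructor
  · intro x hx
    have huniv : (Finset.univ : Finset (Fin nI)).Nonempty := by
      rw [Finset.univ_nonempty_iff]
      exact Fin.pos_iff_nonempty.mp (by omega)
    have := aux18 Finset.univ huniv hr0 hr1 x (fun i _ => hx i)
    simpa using this
  · intro nn I xk xbar c cbar h hcard hh hxbar hxk hbound
    have hI : I.Nonempty := Finset.card_pos.mp (by omega)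
    obtain ⟨h1, h2⟩ := aux18 I hI hr0 hr1 xk hxk
    rw [hcard] at h1 h2
    set D : ℝ := (∑ i, c i * xk i) - cbar with hD
    set ξ : ℝ := (∑ i ∈ I, xk i ^ r) ^ (1 / r) with hxi
    have hξ : 0 < ξ :=
      Real.rpow_pos_of_pos (Finset.sum_pos (fun i hi => Real.rpow_pos_of_pos (hxk i hi) r) hI) _
    have hsub : ∑ i ∈ I, xk i ^ 2 ≤ ∑ i, (xk i - xbar i) ^ 2 := by
      calc ∑ i ∈ I, xk i ^ 2 = ∑ i ∈ I, (xk i - xbar i) ^ 2 :=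
            Finset.sum_congr rfl fun i hi => by rw [hxbar i hi, sub_zero]
        _ ≤ ∑ i, (xk i - xbar i) ^ 2 :=
            Finset.sum_le_sum_of_subset_of_nonneg (Finset.subset_univ I)
              (fun i _ _ => sq_nonneg _)
    have hA : (0 : ℝ) < (nI : ℝ) ^ (1 / r - 1 / 2) * h := by
      have : (0:ℝ) < (nI:ℝ) := by exact_mod_cast hn
      positivity
    have hξle : ξ ≤ ((nI : ℝ) ^ (1 / r - 1 / 2) * h) * D := by
      calc ξ ≤ (nI : ℝ) ^ (1 / r - 1 / 2) * Real.sqrt (∑ i ∈ I, xk i ^ 2) := h1.trans h2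
        _ ≤ (nI : ℝ) ^ (1 / r - 1 / 2) * Real.sqrt (∑ i, (xk i - xbar i) ^ 2) := by gcongr
        _ ≤ (nI : ℝ) ^ (1 / r - 1 / 2) * (h * D) := by gcongr
        _ = ((nI : ℝ) ^ (1 / r - 1 / 2) * h) * D := by ring
    have hD0 : 0 < D := by
      by_contra hc
      push_neg at hc
      nlinarith
    have hratio : ((nI : ℝ) ^ (1 / r - 1 / 2) * h)⁻¹ ≤ D / ξ := by
      rw [le_div_iff₀ hξ, inv_mul_le_iff₀ hA]
      exact hξle
    calc -Real.log ((nI : ℝ) ^ (1 / r - 1 / 2) * h)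
        = Real.log (((nI : ℝ) ^ (1 / r - 1 / 2) * h)⁻¹) := (Real.log_inv _).symm
      _ ≤ Real.log (D / ξ) := Real.log_le_log (by positivity) hratio
end
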